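/- arXiv:2402.06980 — 7 statements merged into one kernel-verified Lean document; each statement's English description precedes it below -/
import Mathlib

section
/- Let X be a finite set, let τ be a fixed-point-free involutive permutation of X, and let A, B ⊆ X satisfy τ(A) = A and τ(B) = B. Then π_B ∘ π_A = π_{Δ(A,B)}, where Δ(A,B) = (A ∪ B) \ (A ∩ B) is the symmetric difference; consequently, for every permutation σ of X, the partial dual relative to B of the partial dual of (σ, τ) relative to A equals the partial dual of (σ, τ) relative to Δ(A,B). (Lemma 2.3(c) expressed via rotation systems.) -/
/-- The partial-duality permutation `π_A` of a rotation system: it agrees with the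
edge involution `τ` on the τ-invariant set `A` of half-edges and is the identity
off `A`. -/
def piPerm {X : Type*} [DecidableEq X] (τ : Equiv.Perm X) (A : Finset X)
    (hτ : ∀ x, τ (τ x) = x) (hA : A.image τ = A) : Equiv.Perm X where
  toFun x := if x ∈ A then τ x else x
  invFun x := if x ∈ A then τ x else x
  left_inv x := by
    by_cases hx : x ∈ A
    · have hτx : τ x ∈ A := by rw [← hA]; exact Finset.mem_image_of_mem τ hx
      simp [hx, hτx, hτ]
    · simp [hx]
  right_inv x := by
    by_cases hx : x ∈ A
    · have hτx : τ x ∈ A := by rw [← hA]; exact Finset.mem_image_of_mem τ hx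
      simp [hx, hτx, hτ]
    · simp [hx]

theorem mem_iff_of_image_eq {X : Type*} [DecidableEq X] (τ : Equiv.Perm X)
    (hτ : ∀ x, τ (τ x) = x) (A : Finset X) (hA : A.image τ = A) (x : X) :
    τ x ∈ A ↔ x ∈ A := by
  constructor
  · intro h
    have h2 := Finset.mem_image_of_mem τ h
    rw [hA] at h2; rwa [hτ] at h2
  · intro h
    rw [← hA]; exact Finset.mem_image_of_mem τ h

theorem symmdiff_image {X : Type*} [DecidableEq X] (τ : Equiv.Perm X)
    (hτ : ∀ x, τ (τ x) = x) (A B : Finset X)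
    (hA : A.image τ = A) (hB : B.image τ = B) :
    ((A ∪ B) \ (A ∩ B)).image τ = (A ∪ B) \ (A ∩ B) := by
  ext y
  simp only [Finset.mem_image, Finset.mem_sdiff, Finset.mem_union, Finset.mem_inter]
  constructor
  · rintro ⟨x, hx, rfl⟩
    rw [mem_iff_of_image_eq τ hτ A hA, mem_iff_of_image_eq τ hτ B hB]
    exact hx
  · intro hy
    refine ⟨τ y, ?_, hτ y⟩
    rw [mem_iff_of_image_eq τ hτ A hA y, mem_iff_of_image_eq τ hτ B hB y]
    exact hy

section PartialDuality

variable {X : Type*} [DecidableEq X] (τ : Equiv.Perm X) (hτ : ∀ x, τ (τ x) = x)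

theorem piPerm_apply (A : Finset X) (hA : A.image τ = A) (x : X) :
    piPerm τ A hτ hA x = if x ∈ A then τ x else x :=
  rfl

/-- On a half-edge of `A`, `π_A` moves to its partner, which lies in `B` exactly when the
half-edge does; so `π_B` undoes the move precisely on `A ∩ B`. -/
theorem piPerm_mul_piPerm (A B : Finset X) (hA : A.image τ = A) (hB : B.image τ = B) :
    piPerm τ B hτ hB * piPerm τ A hτ hA =
      piPerm τ ((A ∪ B) \ (A ∩ B)) hτ (symmdiff_image τ hτ A B hA hB) := by
  ext x
  simp only [Equiv.Perm.mul_apply, piPerm_apply, apply_ite (piPerm τ B hτ hB),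
    mem_iff_of_image_eq τ hτ B hB, Finset.mem_sdiff, Finset.mem_union, Finset.mem_inter]
  by_cases hxA : x ∈ A <;> by_cases hxB : x ∈ B <;> simp [hxA, hxB, hτ]

end PartialDuality

theorem partial_duality_symmDiff_general {X : Type*} [DecidableEq X]
    (τ : Equiv.Perm X) (hτ : ∀ x, τ (τ x) = x)
    (A B : Finset X) (hA : A.image τ = A) (hB : B.image τ = B) :
    piPerm τ B hτ hB * piPerm τ A hτ hA =
        piPerm τ ((A ∪ B) \ (A ∩ B)) hτ (symmdiff_image τ hτ A B hA hB) ∧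
      ∀ σ : Equiv.Perm X,
        (piPerm τ B hτ hB * (piPerm τ A hτ hA * σ), τ) =
          (piPerm τ ((A ∪ B) \ (A ∩ B)) hτ (symmdiff_image τ hτ A B hA hB) * σ, τ) :=
  ⟨piPerm_mul_piPerm τ hτ A B hA hB,
    fun σ => by rw [← mul_assoc, piPerm_mul_piPerm τ hτ A B hA hB]⟩

/-- **Lemma 2.3(c) via rotation systems.**  If `τ` is a fixed-point-free involution on
the finite set `X` of half-edges and `A, B ⊆ X` are τ-invariant, then
`π_B ∘ π_A = π_{Δ(A,B)}` where `Δ(A,B) = (A ∪ B) \ (A ∩ B)` is the symmetric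
difference; consequently, for every rotation `σ`, the partial dual relative to `B`
of the partial dual of `(σ, τ)` relative to `A` equals the partial dual of `(σ, τ)`
relative to `Δ(A,B)`. -/
theorem partial_duality_symmDiff {X : Type*} [Fintype X] [DecidableEq X]
    (τ : Equiv.Perm X) (hτ : ∀ x, τ (τ x) = x) (hfp : ∀ x, τ x ≠ x)
    (A B : Finset X) (hA : A.image τ = A) (hB : B.image τ = B) :
    piPerm τ B hτ hB * piPerm τ A hτ hA =
        piPerm τ ((A ∪ B) \ (A ∩ B)) hτ (symmdiff_image τ hτ A B hA hB) ∧
      ∀ σ : Equiv.Perm X,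
        (piPerm τ B hτ hB * (piPerm τ A hτ hA * σ), τ) =
          (piPerm τ ((A ∪ B) \ (A ∩ B)) hτ (symmdiff_image τ hτ A B hA hB) * σ, τ) :=
  partial_duality_symmDiff_general τ hτ A B hA hB
end

section
/- Let X be a finite set, let τ be a fixed-point-free involutive permutation of X, let A ⊆ X satisfy τ(A) = A, and let σ be any permutation of X. Then the subgroup of the permutation group of X generated by π_A ∘ σ and τ has exactly the same orbits on X as the subgroup generated by σ and τ. In particular, partial duality relative to any set of edges preserves the number of connected components of a ribbon graph. (Lemma 2.3(f) expressed via rotation systems.) -/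
/-! Since `π_A y ∈ {y, τ y}` pointwise, both `π_A σ` and `σ = π_A (π_A σ)` move every point
either like the other rotation or like the other rotation followed by `τ`. Hence each
generating pair sends every point into its orbit under the group generated by the other pair,
and permutations with this property form a subgroup. -/

namespace MulAction

variable {G : Type*} (α : Type*) [Group G] [MulAction G α]

def orbitPreserving (H : Subgroup G) : Subgroup G where
  carrier := {g | ∀ x : α, g • x ∈ orbit H x}
  one_mem' x := by simpa only [one_smul] using mem_orbit_self x
  mul_mem' {a b} ha hb x := by
    rw [mul_smul, ← orbit_eq_iff.mpr (hb x)]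
    exact ha (b • x)
  inv_mem' {g} hg x := by
    have hx := hg (g⁻¹ • x)
    rw [smul_inv_smul] at hx
    exact mem_orbit_symm.mp hx

variable {α}

theorem le_orbitPreserving (H : Subgroup G) : H ≤ orbitPreserving α H :=
  fun g hg _ => ⟨⟨g, hg⟩, rfl⟩

theorem orbit_subset_of_le_orbitPreserving {K H : Subgroup G} (h : K ≤ orbitPreserving α H)
    (x : α) : orbit K x ⊆ orbit H x := by
  rintro _ ⟨g, rfl⟩
  exact h g.2 x

theorem orbit_eq_of_le_orbitPreserving {K H : Subgroup G} (hKH : K ≤ orbitPreserving α H)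
    (hHK : H ≤ orbitPreserving α K) (x : α) : orbit K x = orbit H x :=
  (orbit_subset_of_le_orbitPreserving hKH x).antisymm (orbit_subset_of_le_orbitPreserving hHK x)

theorem closure_pair_le_orbitPreserving {H : Subgroup G} {g h t : G} (hh : h ∈ H) (ht : t ∈ H)
    (hg : ∀ x : α, g • x = h • x ∨ g • x = t • h • x) :
    Subgroup.closure {g, t} ≤ orbitPreserving α H := by
  have hgH : g ∈ orbitPreserving α H := fun x => by
    rcases hg x with hx | hx <;> rw [hx]
    · exact ⟨⟨h, hh⟩, rfl⟩
    · exact ⟨⟨t * h, mul_mem ht hh⟩, mul_smul t h x⟩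
  rw [Subgroup.closure_le, Set.insert_subset_iff, Set.singleton_subset_iff]
  exact ⟨hgH, le_orbitPreserving H ht⟩

end MulAction

section piPerm

variable {X : Type*} [DecidableEq X] (τ : Equiv.Perm X) (A : Finset X)
  (hτ : ∀ x, τ (τ x) = x) (hA : A.image τ = A)

theorem piPerm_apply_eq_or (y : X) : piPerm τ A hτ hA y = y ∨ piPerm τ A hτ hA y = τ y := by
  change (if y ∈ A then τ y else y) = y ∨ (if y ∈ A then τ y else y) = τ y
  split_ifs <;> simp

theorem piPerm_mul_self : piPerm τ A hτ hA * piPerm τ A hτ hA = 1 :=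
  inv_mul_cancel (piPerm τ A hτ hA)

end piPerm

open MulAction in
theorem partial_dual_orbits_general {X : Type*} [DecidableEq X]
    (τ : Equiv.Perm X) (hτ : ∀ x, τ (τ x) = x)
    (A : Finset X) (hA : A.image τ = A) (σ : Equiv.Perm X) :
    ∀ x : X,
      MulAction.orbit (Subgroup.closure {piPerm τ A hτ hA * σ, τ} : Subgroup (Equiv.Perm X)) x =
        MulAction.orbit (Subgroup.closure {σ, τ} : Subgroup (Equiv.Perm X)) x := by
  set π := piPerm τ A hτ hA
  have hπσ (y : X) : (π * σ) • y = σ • y ∨ (π * σ) • y = τ • σ • y :=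
    piPerm_apply_eq_or τ A hτ hA (σ y)
  have hσ (y : X) : σ • y = (π * σ) • y ∨ σ • y = τ • (π * σ) • y := by
    have hσy : σ y = π ((π * σ) y) := by
      rw [← Equiv.Perm.mul_apply, ← mul_assoc, piPerm_mul_self, one_mul]
    simpa only [Equiv.Perm.smul_def, hσy] using piPerm_apply_eq_or τ A hτ hA ((π * σ) y)
  have mem_closure {a b : Equiv.Perm X} {c : Equiv.Perm X} (hc : c = a ∨ c = b) :
      c ∈ Subgroup.closure {a, b} := Subgroup.subset_closure (by simpa using hc)
  exact orbit_eq_of_le_orbitPreserving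
    (closure_pair_le_orbitPreserving (mem_closure (.inl rfl)) (mem_closure (.inr rfl)) hπσ)
    (closure_pair_le_orbitPreserving (mem_closure (.inl rfl)) (mem_closure (.inr rfl)) hσ)

/-- **Lemma 2.3(f) via rotation systems.**  Let `τ` be a fixed-point-free involution on
the finite set `X` of half-edges and let `A ⊆ X` be τ-invariant.  For every rotation
`σ`, the subgroup generated by `π_A ∘ σ` and `τ` has exactly the same orbits on `X`
as the subgroup generated by `σ` and `τ`; in particular partial duality relative to
any set of edges preserves the number of connected components of a ribbon graph. -/
theorem partial_dual_orbits {X : Type*} [Fintype X] [DecidableEq X]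
    (τ : Equiv.Perm X) (hτ : ∀ x, τ (τ x) = x) (hfp : ∀ x, τ x ≠ x)
    (A : Finset X) (hA : A.image τ = A) (σ : Equiv.Perm X) :
    ∀ x : X,
      MulAction.orbit (Subgroup.closure {piPerm τ A hτ hA * σ, τ} : Subgroup (Equiv.Perm X)) x =
        MulAction.orbit (Subgroup.closure {σ, τ} : Subgroup (Equiv.Perm X)) x :=
  partial_dual_orbits_general τ hτ A hA σ
end

section
/- Let X be a finite set, let τ be a fixed-point-free involutive permutation of X, let A ⊆ X satisfy τ(A) = A, and let σ be any permutation of X. Then the Euler genus of the partial dual of (σ, τ) relative to A equals the Euler genus of the partial dual of (σ, τ) relative to the complement X \ A: γ(π_A ∘ σ, τ) = γ(π_{X\A} ∘ σ, τ). (Lemma 2.3(e) expressed via rotation systems.) -/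
theorem compl_image {X : Type*} [Fintype X] [DecidableEq X] (τ : Equiv.Perm X)
    (hτ : ∀ x, τ (τ x) = x) (A : Finset X) (hA : A.image τ = A) :
    Aᶜ.image τ = Aᶜ := by
  ext y
  simp only [Finset.mem_image, Finset.mem_compl]
  constructor
  · rintro ⟨x, hx, rfl⟩
    rw [mem_iff_of_image_eq τ hτ A hA]; exact hx
  · intro hy
    refine ⟨τ y, ?_, hτ y⟩
    rw [mem_iff_of_image_eq τ hτ A hA y]
    exact hy

/-- The Euler genus `γ(σ, τ) = 2c − v + |X|/2 − f` of a rotation system `(σ, τ)` on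
the finite set `X` of half-edges, where `v`, `f` and `c` are the numbers of orbits
of `σ`, of `τ∘σ`, and of the subgroup generated by `σ` and `τ`, respectively. -/
noncomputable def eulerGenus {X : Type*} [Fintype X] (σ τ : Equiv.Perm X) : ℤ :=
  2 * (Nat.card (MulAction.orbitRel.Quotient
        (Subgroup.closure {σ, τ} : Subgroup (Equiv.Perm X)) X) : ℤ)
    - (Nat.card (MulAction.orbitRel.Quotient (Subgroup.zpowers σ) X) : ℤ)
    + (Fintype.card X : ℤ) / 2
    - (Nat.card (MulAction.orbitRel.Quotient (Subgroup.zpowers (τ * σ)) X) : ℤ)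

/-- **Lemma 2.3(e) via rotation systems.**  Let `τ` be a fixed-point-free involution
on the finite set `X` of half-edges, let `A ⊆ X` be τ-invariant and let `σ` be any
rotation.  Then the Euler genus of the partial dual of `(σ, τ)` relative to `A`
equals the Euler genus of the partial dual relative to the complement `X \ A`. -/
theorem partial_dual_genus_complement {X : Type*} [Fintype X] [DecidableEq X]
    (τ : Equiv.Perm X) (hτ : ∀ x, τ (τ x) = x) (hfp : ∀ x, τ x ≠ x)
    (A : Finset X) (hA : A.image τ = A) (σ : Equiv.Perm X) :
    eulerGenus (piPerm τ A hτ hA * σ) τ =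
      eulerGenus (piPerm τ Aᶜ hτ (compl_image τ hτ A hA) * σ) τ := by
  have hcompl : piPerm τ Aᶜ hτ (compl_image τ hτ A hA) = τ * piPerm τ A hτ hA := by
    ext x
    simp only [piPerm, Equiv.coe_fn_mk, Equiv.Perm.mul_apply, Finset.mem_compl]
    by_cases hx : x ∈ A <;> simp [hx, hτ]
  rw [hcompl, mul_assoc]
  set P := piPerm τ A hτ hA * σ with hP
  have hττ : τ * (τ * P) = P := by
    ext x; simp [Equiv.Perm.mul_apply, hτ]
  have hcl : (Subgroup.closure {τ * P, τ} : Subgroup (Equiv.Perm X))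
      = Subgroup.closure {P, τ} := by
    apply le_antisymm
    · rw [Subgroup.closure_le]
      rintro x hx
      rcases hx with rfl | rfl
      · exact mul_mem (Subgroup.subset_closure (by simp))
          (Subgroup.subset_closure (by simp))
      · exact Subgroup.subset_closure (by simp)
    · rw [Subgroup.closure_le]
      rintro x hx
      rcases hx with rfl | rfl
      · have : P = τ⁻¹ * (τ * P) := by group
        rw [this]
        exact mul_mem (inv_mem (Subgroup.subset_closure (by simp)))
          (Subgroup.subset_closure (by simp))
      · exact Subgroup.subset_closure (by simp)
  unfold eulerGenus
  rw [hττ, hcl]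
  ring
end

section
/- Let X be a finite set, let σ and τ be permutations of X with τ a fixed-point-free involution, and let a, b ∈ X be distinct with τ(a) = b. Set δ_v = +1 if a and b lie in different orbits of σ and δ_v = −1 if they lie in the same orbit of σ; set δ_f = +1 if a and b lie in different orbits of τ∘σ and δ_f = −1 if they lie in the same orbit of τ∘σ. Then the Euler genus of the partial dual of (σ, τ) relative to the single edge {a, b} satisfies γ((swap a b) ∘ σ, τ) − γ(σ, τ) = δ_v + δ_f. (Proposition 6.1 specialized to a single edge, expressed via rotation systems.) -/
/-!
Multiplying a permutation by the transposition `swap a b` merges the cycles through `a` and `b`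
when they differ and splits their common cycle otherwise, so `v` changes by `-δ_v`. Because `τ`
exchanges `a` and `b`, the face permutation of the partial dual is `swap a b * (τ * σ)`, so `f`
changes by `-δ_f` in the same way. Finally `swap a b` moves each point at most along `τ`, so
`{σ, τ}` and `{swap a b * σ, τ}` generate groups with the same orbits and `c` is unchanged.
-/

open Equiv Equiv.Perm MulAction Subgroup

theorem MulAction.orbitRel_closure_le {G α : Type*} [Group G] [MulAction G α] {S : Set G}
    {H : Subgroup G} (hS : ∀ s ∈ S, ∀ x : α, orbitRel H α (s • x) x) :
    orbitRel (closure S) α ≤ orbitRel H α := by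
  have key : ∀ g ∈ closure S, ∀ x : α, orbitRel H α (g • x) x := fun g hg => by
    induction hg using closure_induction with
    | mem s hs => exact hS s hs
    | one => intro x; rw [one_smul]
    | mul g h _ _ hg hh => intro x; rw [mul_smul]; exact (orbitRel H α).trans' (hg _) (hh x)
    | inv g _ hg => intro x; simpa using (orbitRel H α).symm' (hg (g⁻¹ • x))
  rintro x y ⟨⟨g, hg⟩, rfl⟩
  exact key g hg y

namespace Equiv.Perm

variable {α : Type*} {f : Perm α} {a b x y : α}

theorem orbitRel_zpowers (f : Perm α) : orbitRel (zpowers f) α = SameCycle.setoid f := by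
  ext x y
  rw [orbitRel_apply, mem_orbit_iff, Setoid.comm']
  exact ⟨fun ⟨⟨_, k, rfl⟩, h⟩ => ⟨k, h⟩, fun ⟨k, h⟩ => ⟨⟨f ^ k, k, rfl⟩, h⟩⟩

theorem SameCycle.mem_of_mapsTo [Finite α] {s : Set α} (hs : Set.MapsTo f s s)
    (hxy : f.SameCycle x y) (hx : x ∈ s) : y ∈ s := by
  obtain ⟨n, rfl⟩ := hxy.exists_nat_pow_eq
  clear hxy
  induction n with
  | zero => exact hx
  | succ n ih => rw [pow_succ', mul_apply]; exact hs ih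

theorem not_sameCycle_of_pow_apply_eq_self {m : ℕ} (hm : 0 < m) (hx : (f ^ m) x = x)
    (hy : ∀ i < m, (f ^ i) x ≠ y) : ¬ f.SameCycle x y := by
  rintro ⟨n, rfl⟩
  have hmod : 0 ≤ n % m := Int.emod_nonneg n (by omega)
  have hlt : n % m < m := Int.emod_lt_of_pos n (by omega)
  refine hy (n % m).toNat (by omega) ?_
  rw [← zpow_natCast, Int.toNat_of_nonneg hmod]
  conv_rhs => rw [← Int.emod_add_mul_ediv n m, zpow_add, zpow_mul, mul_apply, zpow_natCast,
    zpow_apply_eq_self_of_apply_eq_self hx]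

/-- Fixed points count as cycles here, unlike in `cycleFactorsFinset`. -/
noncomputable def numCycles (f : Perm α) : ℕ := Nat.card (Quotient (SameCycle.setoid f))

theorem card_orbitRel_quotient_zpowers (f : Perm α) :
    Nat.card (orbitRel.Quotient (zpowers f) α) = numCycles f := by
  rw [numCycles, ← orbitRel_zpowers]

variable [DecidableEq α]

theorem swap_mul_pow_succ_apply {n : ℕ} (h : ∀ i, 0 < i → i ≤ n → (f ^ i) a ≠ a ∧ (f ^ i) a ≠ b) :
    ((swap a b * f) ^ (n + 1)) a = swap a b ((f ^ (n + 1)) a) := by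
  induction n with
  | zero => rfl
  | succ n ih =>
    obtain ⟨hna, hnb⟩ := h (n + 1) n.succ_pos le_rfl
    rw [pow_succ', mul_apply, ih fun i hi hin => h i hi (by omega), swap_apply_of_ne_of_ne hna hnb,
      mul_apply, pow_succ' f (n + 1), mul_apply]

theorem sameCycle_swap_mul_iff [Finite α] (hab : a ≠ b) :
    (swap a b * f).SameCycle a b ↔ ¬ f.SameCycle a b := by
  classical
  -- `m` is the first return of the `f`-orbit of `a` to `{a, b}`; up to that time
  -- `swap a b * f` follows `f`, and at time `m` it lands on the other point of `{a, b}`.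
  have hex : ∃ m, 0 < m ∧ ((f ^ m) a = a ∨ (f ^ m) a = b) :=
    ⟨orderOf f, orderOf_pos f, .inl (by rw [pow_orderOf_eq_one]; rfl)⟩
  obtain ⟨hm, hhit⟩ := Nat.find_spec hex
  set m := Nat.find hex
  have hfirst : ∀ i, 0 < i → i < m → (f ^ i) a ≠ a ∧ (f ^ i) a ≠ b := fun i hi him =>
    not_or.mp fun h => Nat.find_min hex him ⟨hi, h⟩
  obtain ⟨n, hn⟩ : ∃ n, m = n + 1 := ⟨m - 1, by omega⟩
  have hg : ((swap a b * f) ^ m) a = swap a b ((f ^ m) a) := by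
    rw [hn]; exact swap_mul_pow_succ_apply fun i hi hin => hfirst i hi (by omega)
  rcases hhit with hret | hreach
  · refine iff_of_true ⟨m, by rw [zpow_natCast, hg, hret, swap_apply_left]⟩ ?_
    refine not_sameCycle_of_pow_apply_eq_self hm hret fun i him => ?_
    rcases i.eq_zero_or_pos with rfl | hi
    · exact hab
    · exact (hfirst i hi him).2
  · refine iff_of_false ?_ (not_not.mpr ⟨m, by rwa [zpow_natCast]⟩)
    refine not_sameCycle_of_pow_apply_eq_self hm (by rw [hg, hreach, swap_apply_right])
      fun i him => ?_
    cases i with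
    | zero => exact hab
    | succ k =>
      obtain ⟨hka, hkb⟩ := hfirst (k + 1) k.succ_pos him
      rw [swap_mul_pow_succ_apply fun i hi hik => hfirst i hi (by omega),
        swap_apply_of_ne_of_ne hka hkb]
      exact hkb

theorem SameCycle.swap_mul_of_not_sameCycle [Finite α] (h : ¬ f.SameCycle a b)
    (hxy : f.SameCycle x y) : (swap a b * f).SameCycle x y := by
  set g := swap a b * f
  have hab : g.SameCycle a b := (sameCycle_swap_mul_iff (by rintro rfl; exact h .rfl)).2 h
  refine hxy.mem_of_mapsTo (s := {z | g.SameCycle x z}) (fun z (hz : g.SameCycle x z) => ?_) .rfl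
  have hswap : g.SameCycle (g z) (swap a b (g z)) :=
    Quotient.exact (apply_swap_eq_self (v := Quotient.mk (SameCycle.setoid g))
      (Quotient.sound hab) (g z)).symm
  rw [Set.mem_ofPred_eq, show f z = swap a b (g z) from (swap_apply_self a b (f z)).symm]
  exact (hz.trans (sameCycle_apply_right.2 .rfl)).trans hswap

open Classical in
theorem sameCycle_setoid_swap_mul_eq_ker [Finite α] (h : ¬ f.SameCycle a b) :
    SameCycle.setoid (swap a b * f) =
      Setoid.ker (Function.update id ⟦b⟧ ⟦a⟧ ∘ Quotient.mk (SameCycle.setoid f)) := by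
  set g := swap a b * f
  set φ := Function.update id ⟦b⟧ ⟦a⟧ ∘ Quotient.mk (SameCycle.setoid f)
  have hφ : φ a = φ b := by
    simp [φ, Function.update_apply]
  ext x y
  constructor
  · intro hxy
    refine hxy.mem_of_mapsTo (s := {z | φ x = φ z}) (fun z (hz : φ x = φ z) => ?_) rfl
    rw [Set.mem_ofPred_eq, mul_apply, apply_swap_eq_self hφ, hz]
    simp only [φ, Function.comp_apply]
    congr 1
    exact Quotient.sound (sameCycle_apply_right.2 .rfl : f.SameCycle z (f z))
  · intro hxy
    have hba : g.SameCycle b a :=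
      ((sameCycle_swap_mul_iff (by rintro rfl; exact h .rfl)).2 h).symm
    have hout (u : α) : g.SameCycle u (⟦u⟧ : Quotient (SameCycle.setoid f)).out :=
      SameCycle.swap_mul_of_not_sameCycle h (Quotient.mk_out (s := SameCycle.setoid f) u).symm
    have hrep : ∀ z, g.SameCycle z (φ z).out := by
      intro z
      by_cases hzb : f.SameCycle z b
      · have hφz : φ z = ⟦a⟧ := by
          simp [φ, Quotient.sound (s := SameCycle.setoid f) hzb]
        rw [hφz]
        exact (hzb.swap_mul_of_not_sameCycle h).trans (hba.trans (hout a))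
      · have hφz : φ z = ⟦z⟧ := Function.update_of_ne (fun hz => hzb (Quotient.exact hz)) _ _
        rw [hφz]
        exact hout z
    exact (hrep x).trans ((congrArg Quotient.out hxy) ▸ (hrep y).symm)

theorem range_update_id {β : Type*} [DecidableEq β] {c d : β} (hcd : c ≠ d) :
    Set.range (Function.update id d c) = {d}ᶜ := by
  ext q
  refine ⟨?_, fun hq => ⟨q, Function.update_of_ne hq _ _⟩⟩
  rintro ⟨p, rfl⟩
  rcases eq_or_ne p d with rfl | hp
  · simpa using hcd
  · simp [hp]

theorem numCycles_swap_mul_add_one [Finite α] (h : ¬ f.SameCycle a b) :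
    numCycles (swap a b * f) + 1 = numCycles f := by
  classical
  have hab : (⟦a⟧ : Quotient (SameCycle.setoid f)) ≠ ⟦b⟧ := fun e => h (Quotient.exact e)
  rw [numCycles, sameCycle_setoid_swap_mul_eq_ker h, Nat.card_congr (Setoid.quotientKerEquivRange _),
    Quotient.mk_surjective.range_comp, range_update_id hab, Nat.card_coe_set_eq,
    ← Set.ncard_singleton ⟦b⟧, Set.ncard_compl_add_ncard, numCycles]

theorem numCycles_swap_mul [Fintype α] (hab : a ≠ b) :
    (numCycles (swap a b * f) : ℤ) = numCycles f + if f.SameCycle a b then 1 else -1 := by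
  split_ifs with h
  · have hsplit : ¬ (swap a b * f).SameCycle a b := fun hg => (sameCycle_swap_mul_iff hab).1 hg h
    have := numCycles_swap_mul_add_one hsplit
    rw [swap_mul_self_mul] at this
    omega
  · have := numCycles_swap_mul_add_one h
    omega

theorem orbitRel_closure_swap_mul {σ τ : Perm α} (hτa : τ a = b) :
    orbitRel (closure {swap a b * σ, τ}) α = orbitRel (closure {σ, τ}) α := by
  have hle : ∀ σ σ' : Perm α, σ' = swap a b * σ →
      orbitRel (closure {σ', τ}) α ≤ orbitRel (closure {σ, τ}) α := by
    rintro σ _ rfl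
    set K := closure {σ, τ}
    have hK : ∀ g ∈ K, ∀ x : α, orbitRel K α (g • x) x := fun g hg x => ⟨⟨g, hg⟩, rfl⟩
    refine orbitRel_closure_le ?_
    rintro s (rfl | rfl) x
    · have hab : (⟦a⟧ : orbitRel.Quotient K α) = ⟦b⟧ := by
        refine Quotient.sound ((orbitRel K α).symm' ?_)
        rw [← hτa]
        exact hK τ (subset_closure (by simp)) a
      exact (orbitRel K α).trans' (Quotient.exact (apply_swap_eq_self hab (σ x)))
        (hK σ (subset_closure (by simp)) x)
    · exact hK _ (subset_closure (by simp)) x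
  exact le_antisymm (hle σ _ rfl) (hle _ σ (swap_mul_self_mul a b σ).symm)

end Equiv.Perm

theorem partial_dual_single_edge_genus_change_general {X : Type*} [Fintype X] [DecidableEq X]
    (σ τ : Equiv.Perm X) (hτ : ∀ x, τ (τ x) = x)
    (a b : X) (hab : a ≠ b) (hτab : τ a = b)
    (δv δf : ℤ)
    (hδv : δv = if σ.SameCycle a b then -1 else 1)
    (hδf : δf = if (τ * σ).SameCycle a b then -1 else 1) :
    eulerGenus (Equiv.swap a b * σ) τ - eulerGenus σ τ = δv + δf := by
  have hτb : τ b = a := hτab ▸ hτ a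
  have hface : τ * (swap a b * σ) = swap a b * (τ * σ) := by
    rw [← mul_assoc, mul_swap_eq_swap_mul, hτab, hτb, swap_comm, mul_assoc]
  have hcomponents : Nat.card (orbitRel.Quotient (closure {swap a b * σ, τ}) X) =
      Nat.card (orbitRel.Quotient (closure {σ, τ}) X) := by
    unfold orbitRel.Quotient
    rw [orbitRel_closure_swap_mul hτab]
  simp only [eulerGenus, card_orbitRel_quotient_zpowers, hface, hcomponents,
    numCycles_swap_mul hab, hδv, hδf]
  split_ifs <;> ring

/-- **Proposition 6.1 for a single edge, via rotation systems.**  Let `(σ, τ)` be a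
rotation system on the finite set `X` of half-edges (`τ` a fixed-point-free
involution) and let `{a, b}` be an edge, `τ a = b`, `a ≠ b`.  With `δ_v = 1` if `a`
and `b` lie in different orbits of `σ` and `δ_v = −1` otherwise, and `δ_f = 1` if
`a` and `b` lie in different orbits of `τ∘σ` and `δ_f = −1` otherwise, the Euler
genus of the partial dual relative to the edge `{a, b}` satisfies
`γ((swap a b)∘σ, τ) − γ(σ, τ) = δ_v + δ_f`. -/
theorem partial_dual_single_edge_genus_change {X : Type*} [Fintype X] [DecidableEq X]
    (σ τ : Equiv.Perm X) (hτ : ∀ x, τ (τ x) = x) (hfp : ∀ x, τ x ≠ x)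
    (a b : X) (hab : a ≠ b) (hτab : τ a = b)
    (δv δf : ℤ)
    (hδv : δv = if σ.SameCycle a b then -1 else 1)
    (hδf : δf = if (τ * σ).SameCycle a b then -1 else 1) :
    eulerGenus (Equiv.swap a b * σ) τ - eulerGenus σ τ = δv + δf :=
  partial_dual_single_edge_genus_change_general σ τ hτ a b hab hτab δv δf hδv hδf
end

section
/- Let X be a finite set, let τ₀, τ₁, τ₂ be fixed-point-free involutive permutations of X, and let p, q, r, s ∈ X be pairwise distinct with τ₀(p) = s, τ₀(q) = r, τ₂(p) = q and τ₂(r) = s. Suppose there exists a function ε : X → ℤ/2ℤ such that ε(τᵢ(x)) ≠ ε(x) for all x ∈ X and i ∈ {0, 1, 2}. Then the same ε satisfies ε((τ₀ ∘ κ)(x)) ≠ ε(x) and ε((τ₂ ∘ κ)(x)) ≠ ε(x) for all x ∈ X, where κ = τ₀ᵉ ∘ τ₂ᵉ; hence the partial dual of (τ₀, τ₁, τ₂) relative to e also admits such a function, i.e., partial duality preserves orientability of ribbon graphs. (Lemma 2.3(d) expressed via bi-rotation systems.) -/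
/-- `τ₀ᵉ`, the permutation swapping the flags `p ↔ s` and `q ↔ r` of an edge
(with `τ₀ p = s` and `τ₀ q = r`) and fixing all other flags. -/
def tau0e {X : Type*} [DecidableEq X] (p q r s : X) : Equiv.Perm X :=
  Equiv.swap p s * Equiv.swap q r

/-- `τ₂ᵉ`, the permutation swapping the flags `p ↔ q` and `r ↔ s` of an edge
(with `τ₂ p = q` and `τ₂ r = s`) and fixing all other flags. -/
def tau2e {X : Type*} [DecidableEq X] (p q r s : X) : Equiv.Perm X :=
  Equiv.swap p q * Equiv.swap r s

/-- `κ := τ₀ᵉ ∘ τ₂ᵉ`, the permutation used in the partial-dual construction for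
bi-rotation systems: the partial dual of `(τ₀, τ₁, τ₂)` relative to the edge `e`
with flags `p, q, r, s` is `(τ₀ ∘ κ, τ₁, τ₂ ∘ κ)`. -/
def kappaE {X : Type*} [DecidableEq X] (p q r s : X) : Equiv.Perm X :=
  tau0e p q r s * tau2e p q r s

set_option maxHeartbeats 1000000 in
/-- **Lemma 2.3(d) via bi-rotation systems.**  Let `(τ₀, τ₁, τ₂)` be a bi-rotation
system on the finite set `X` of local flags, and let `p, q, r, s` be the four
pairwise distinct flags of an edge `e`, so `τ₀ p = s`, `τ₀ q = r`, `τ₂ p = q`,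
`τ₂ r = s`.  If `ε : X → ℤ/2ℤ` satisfies `ε (τᵢ x) ≠ ε x` for all `x` and
`i ∈ {0, 1, 2}` (i.e. the ribbon graph is orientable), then the same `ε` satisfies
`ε ((τ₀ ∘ κ) x) ≠ ε x` and `ε ((τ₂ ∘ κ) x) ≠ ε x` for all `x`; hence the partial
dual relative to `e` also admits such a function, i.e. partial duality preserves
orientability. -/
theorem partial_dual_preserves_orientability {X : Type*} [Fintype X] [DecidableEq X]
    (τ₀ τ₁ τ₂ : Equiv.Perm X)
    (h0inv : ∀ x, τ₀ (τ₀ x) = x) (h0fp : ∀ x, τ₀ x ≠ x)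
    (h1inv : ∀ x, τ₁ (τ₁ x) = x) (h1fp : ∀ x, τ₁ x ≠ x)
    (h2inv : ∀ x, τ₂ (τ₂ x) = x) (h2fp : ∀ x, τ₂ x ≠ x)
    (p q r s : X)
    (hpq : p ≠ q) (hpr : p ≠ r) (hps : p ≠ s) (hqr : q ≠ r) (hqs : q ≠ s) (hrs : r ≠ s)
    (e0p : τ₀ p = s) (e0q : τ₀ q = r) (e2p : τ₂ p = q) (e2r : τ₂ r = s)
    (ε : X → ZMod 2)
    (hε0 : ∀ x, ε (τ₀ x) ≠ ε x) (hε1 : ∀ x, ε (τ₁ x) ≠ ε x) (hε2 : ∀ x, ε (τ₂ x) ≠ ε x) :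
    (∀ x, ε ((τ₀ * kappaE p q r s) x) ≠ ε x) ∧
      (∀ x, ε ((τ₂ * kappaE p q r s) x) ≠ ε x) ∧
      ∃ ε' : X → ZMod 2,
        (∀ x, ε' ((τ₀ * kappaE p q r s) x) ≠ ε' x) ∧
          (∀ x, ε' (τ₁ x) ≠ ε' x) ∧
          (∀ x, ε' ((τ₂ * kappaE p q r s) x) ≠ ε' x) := by
  have h0r : τ₀ r = q := by rw [← e0q, h0inv]
  have h0s : τ₀ s = p := by rw [← e0p, h0inv]
  have h2q : τ₂ q = p := by rw [← e2p, h2inv]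
  have h2s : τ₂ s = r := by rw [← e2r, h2inv]
  have hκ : ∀ x, (kappaE p q r s) x =
      if x = p then r else if x = q then s else if x = r then p else
        if x = s then q else x := by
    intro x
    simp only [kappaE, tau0e, tau2e, Equiv.Perm.mul_apply, Equiv.swap_apply_def]
    split_ifs <;> simp_all
  have c0 : ∀ x, ε ((τ₀ * kappaE p q r s) x) ≠ ε x := by
    intro x
    simp only [Equiv.Perm.mul_apply, hκ]
    split_ifs with h1 h2 h3 h4
    · subst h1; rw [h0r, ← e2p]; exact hε2 x
    · subst h2; rw [h0s, ← h2q]; exact hε2 x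
    · subst h3; rw [e0p, ← e2r]; exact hε2 x
    · subst h4; rw [e0q, ← h2s]; exact hε2 x
    · exact hε0 x
  have c2 : ∀ x, ε ((τ₂ * kappaE p q r s) x) ≠ ε x := by
    intro x
    simp only [Equiv.Perm.mul_apply, hκ]
    split_ifs with h1 h2 h3 h4
    · subst h1; rw [e2r, ← e0p]; exact hε0 x
    · subst h2; rw [h2s, ← e0q]; exact hε0 x
    · subst h3; rw [e2p, ← h0r]; exact hε0 x
    · subst h4; rw [h2q, ← h0s]; exact hε0 x
    · exact hε2 x
  exact ⟨c0, c2, ε, c0, hε1, c2⟩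
end

section
/- Let X be a finite set, let τ₀ and τ₂ be fixed-point-free involutive permutations of X, and let p, q, r, s ∈ X be pairwise distinct with τ₀(p) = s, τ₀(q) = r, τ₂(p) = q and τ₂(r) = s. Then both composites τ₀ ∘ κ and τ₂ ∘ κ, where κ = τ₀ᵉ ∘ τ₂ᵉ, are again fixed-point-free involutive permutations of X. Hence the partial dual of a bi-rotation system relative to an edge is again a bi-rotation system. (Well-definedness of the construction in Proposition 5.2.) -/
/-- **Well-definedness of the partial dual of a bi-rotation system (Proposition
5.2).**  Let `τ₀`, `τ₂` be fixed-point-free involutive permutations of a finite set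
`X` and let `p, q, r, s` be pairwise distinct flags of an edge `e`, so `τ₀ p = s`,
`τ₀ q = r`, `τ₂ p = q`, `τ₂ r = s`.  Then `τ₀ ∘ κ` and `τ₂ ∘ κ`, with
`κ = τ₀ᵉ ∘ τ₂ᵉ`, are again fixed-point-free involutions; hence the partial dual of
a bi-rotation system relative to an edge is again a bi-rotation system. -/
theorem partial_dual_birotation_well_defined {X : Type*} [Fintype X] [DecidableEq X]
    (τ₀ τ₂ : Equiv.Perm X)
    (h0inv : ∀ x, τ₀ (τ₀ x) = x) (h0fp : ∀ x, τ₀ x ≠ x)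
    (h2inv : ∀ x, τ₂ (τ₂ x) = x) (h2fp : ∀ x, τ₂ x ≠ x)
    (p q r s : X)
    (hpq : p ≠ q) (hpr : p ≠ r) (hps : p ≠ s) (hqr : q ≠ r) (hqs : q ≠ s) (hrs : r ≠ s)
    (e0p : τ₀ p = s) (e0q : τ₀ q = r) (e2p : τ₂ p = q) (e2r : τ₂ r = s) :
    (∀ x, (τ₀ * kappaE p q r s) ((τ₀ * kappaE p q r s) x) = x) ∧
      (∀ x, (τ₀ * kappaE p q r s) x ≠ x) ∧
      (∀ x, (τ₂ * kappaE p q r s) ((τ₂ * kappaE p q r s) x) = x) ∧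
      (∀ x, (τ₂ * kappaE p q r s) x ≠ x) := by
  have h0s : τ₀ s = p := by rw [← e0p, h0inv]
  have h0r : τ₀ r = q := by rw [← e0q, h0inv]
  have h2q : τ₂ q = p := by rw [← e2p, h2inv]
  have h2s : τ₂ s = r := by rw [← e2r, h2inv]
  have k1 : kappaE p q r s p = r := by
    simp only [kappaE, tau0e, tau2e, Equiv.Perm.mul_apply,
      Equiv.swap_apply_of_ne_of_ne hpr hps, Equiv.swap_apply_left,
      Equiv.swap_apply_of_ne_of_ne hpr.symm hrs]
  have k2 : kappaE p q r s q = s := by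
    simp only [kappaE, tau0e, tau2e, Equiv.Perm.mul_apply,
      Equiv.swap_apply_of_ne_of_ne hqr hqs, Equiv.swap_apply_right,
      Equiv.swap_apply_of_ne_of_ne hpq hpr, Equiv.swap_apply_left]
  have k3 : kappaE p q r s r = p := by
    simp only [kappaE, tau0e, tau2e, Equiv.Perm.mul_apply, Equiv.swap_apply_left,
      Equiv.swap_apply_of_ne_of_ne hps.symm hqs.symm,
      Equiv.swap_apply_of_ne_of_ne hqs.symm hrs.symm, Equiv.swap_apply_right]
  have k4 : kappaE p q r s s = q := by
    simp only [kappaE, tau0e, tau2e, Equiv.Perm.mul_apply, Equiv.swap_apply_right,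
      Equiv.swap_apply_of_ne_of_ne hpr.symm hqr.symm,
      Equiv.swap_apply_of_ne_of_ne hpq.symm hqs]
  have hκ : ∀ x, kappaE p q r s x =
      if x = p then r else if x = q then s else if x = r then p else
      if x = s then q else x := by
    intro x
    split_ifs with h1 h2 h3 h4
    · subst h1; exact k1
    · subst h2; exact k2
    · subst h3; exact k3
    · subst h4; exact k4
    · simp only [kappaE, tau0e, tau2e, Equiv.Perm.mul_apply,
        Equiv.swap_apply_of_ne_of_ne h3 h4, Equiv.swap_apply_of_ne_of_ne h1 h2,
        Equiv.swap_apply_of_ne_of_ne h2 h3, Equiv.swap_apply_of_ne_of_ne h1 h4]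
  have h0out : ∀ x, x ≠ p → x ≠ q → x ≠ r → x ≠ s →
      τ₀ x ≠ p ∧ τ₀ x ≠ q ∧ τ₀ x ≠ r ∧ τ₀ x ≠ s := by
    intro x hp hq hr hs
    refine ⟨fun h => hs ?_, fun h => hr ?_, fun h => hq ?_, fun h => hp ?_⟩
    · rw [← h0inv x, h, e0p]
    · rw [← h0inv x, h, e0q]
    · rw [← h0inv x, h, h0r]
    · rw [← h0inv x, h, h0s]
  have h2out : ∀ x, x ≠ p → x ≠ q → x ≠ r → x ≠ s →
      τ₂ x ≠ p ∧ τ₂ x ≠ q ∧ τ₂ x ≠ r ∧ τ₂ x ≠ s := by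
    intro x hp hq hr hs
    refine ⟨fun h => hq ?_, fun h => hp ?_, fun h => hs ?_, fun h => hr ?_⟩
    · rw [← h2inv x, h, e2p]
    · rw [← h2inv x, h, h2q]
    · rw [← h2inv x, h, e2r]
    · rw [← h2inv x, h, h2s]
  have key0 : ∀ x, (τ₀ * kappaE p q r s) x =
      if x = p then q else if x = q then p else if x = r then s else
      if x = s then r else τ₀ x := by
    intro x
    rw [Equiv.Perm.mul_apply, hκ]
    split_ifs with h1 h2 h3 h4
    · subst h1; rw [h0r]
    · subst h2; rw [h0s]
    · subst h3; rw [e0p]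
    · subst h4; rw [e0q]
    · rfl
  have key2 : ∀ x, (τ₂ * kappaE p q r s) x =
      if x = p then s else if x = q then r else if x = r then q else
      if x = s then p else τ₂ x := by
    intro x
    rw [Equiv.Perm.mul_apply, hκ]
    split_ifs with h1 h2 h3 h4
    · subst h1; rw [e2r]
    · subst h2; rw [h2s]
    · subst h3; rw [e2p]
    · subst h4; rw [h2q]
    · rfl
  refine ⟨?_, ?_, ?_, ?_⟩
  · intro x
    by_cases hp : x = p
    · simp [key0, hp, hpq, hpq.symm]
    by_cases hq : x = q
    · simp [key0, hp, hq, hpq, hpq.symm]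
    by_cases hr : x = r
    · simp [key0, hp, hq, hr, hpr.symm, hqr.symm, hps.symm, hqs.symm, hrs, hrs.symm]
    by_cases hs : x = s
    · simp [key0, hp, hq, hr, hs, hpr.symm, hqr.symm, hps.symm, hqs.symm, hrs, hrs.symm]
    · obtain ⟨o1, o2, o3, o4⟩ := h0out x hp hq hr hs
      rw [key0 x, if_neg hp, if_neg hq, if_neg hr, if_neg hs, key0,
        if_neg o1, if_neg o2, if_neg o3, if_neg o4, h0inv]
  · intro x
    rw [key0]
    split_ifs with h1 h2 h3 h4
    · subst h1; exact hpq.symm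
    · subst h2; exact hpq
    · subst h3; exact hrs.symm
    · subst h4; exact hrs
    · exact h0fp x
  · intro x
    by_cases hp : x = p
    · simp [key2, hp, hps, hps.symm, hqs.symm, hrs.symm]
    by_cases hq : x = q
    · simp [key2, hp, hq, hqr, hqr.symm, hpr.symm, hpq.symm]
    by_cases hr : x = r
    · simp [key2, hp, hq, hr, hpr.symm, hqr.symm, hpq, hpq.symm]
    by_cases hs : x = s
    · simp [key2, hp, hq, hs, hps.symm, hqs.symm, hrs.symm]
    · obtain ⟨o1, o2, o3, o4⟩ := h2out x hp hq hr hs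
      rw [key2 x, if_neg hp, if_neg hq, if_neg hr, if_neg hs, key2,
        if_neg o1, if_neg o2, if_neg o3, if_neg o4, h2inv]
  · intro x
    rw [key2]
    split_ifs with h1 h2 h3 h4
    · subst h1; exact hps.symm
    · subst h2; exact hqr.symm
    · subst h3; exact hqr
    · subst h4; exact hps
    · exact h2fp x
end

section
/- Let X be a finite set, let τ₀, τ₁, τ₂ be fixed-point-free involutive permutations of X, and let p, q, r, s ∈ X be pairwise distinct with τ₀(p) = s, τ₀(q) = r, τ₂(p) = q and τ₂(r) = s. Then: (i) τ₀ᵉ and τ₂ᵉ commute and κ = τ₀ᵉ ∘ τ₂ᵉ satisfies κ ∘ κ = id; (ii) the partial dual (τ₀', τ₁', τ₂') = (τ₀ ∘ κ, τ₁, τ₂ ∘ κ) again satisfies the edge relations τ₀'(p) = q, τ₀'(r) = s, τ₂'(p) = s, τ₂'(q) = r at the same four flags, and its associated edge permutations satisfy (τ₀')ᵉ ∘ (τ₂')ᵉ = κ; (iii) consequently, applying the partial-dual construction relative to e to (τ₀', τ₁', τ₂') returns the original triple (τ₀, τ₁, τ₂), i.e., partial duality relative to an edge is an involution on bi-rotation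 systems. (Lemma 2.3(b) expressed via bi-rotation systems.) -/
/-- **Lemma 2.3(b) via bi-rotation systems.**  Let `(τ₀, τ₁, τ₂)` be a bi-rotation
system on the finite set `X` of local flags and let `p, q, r, s` be the four
pairwise distinct flags of an edge `e` (`τ₀ p = s`, `τ₀ q = r`, `τ₂ p = q`,
`τ₂ r = s`).  Then:
(i) `τ₀ᵉ` and `τ₂ᵉ` commute, and `κ = τ₀ᵉ ∘ τ₂ᵉ` satisfies `κ ∘ κ = id`;
(ii) the partial dual `(τ₀', τ₁', τ₂') = (τ₀ ∘ κ, τ₁, τ₂ ∘ κ)` again satisfies the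
edge relations `τ₀' p = q`, `τ₀' r = s`, `τ₂' p = s`, `τ₂' q = r` at the same four
flags (so the dual edge has the flag quadruple `(p, s, r, q)`), and its associated
edge permutations satisfy `(τ₀')ᵉ ∘ (τ₂')ᵉ = κ`, i.e. `kappaE p s r q = κ`;
(iii) consequently, applying the partial-dual construction relative to `e` to
`(τ₀', τ₁', τ₂')` returns the original triple `(τ₀, τ₁, τ₂)`: partial duality
relative to an edge is an involution on bi-rotation systems. -/
theorem partial_dual_birotation_involution {X : Type*} [Fintype X] [DecidableEq X]
    (τ₀ τ₁ τ₂ : Equiv.Perm X)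
    (h0inv : ∀ x, τ₀ (τ₀ x) = x) (h0fp : ∀ x, τ₀ x ≠ x)
    (h1inv : ∀ x, τ₁ (τ₁ x) = x) (h1fp : ∀ x, τ₁ x ≠ x)
    (h2inv : ∀ x, τ₂ (τ₂ x) = x) (h2fp : ∀ x, τ₂ x ≠ x)
    (p q r s : X)
    (hpq : p ≠ q) (hpr : p ≠ r) (hps : p ≠ s) (hqr : q ≠ r) (hqs : q ≠ s) (hrs : r ≠ s)
    (e0p : τ₀ p = s) (e0q : τ₀ q = r) (e2p : τ₂ p = q) (e2r : τ₂ r = s) :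
    -- (i)
    (tau0e p q r s * tau2e p q r s = tau2e p q r s * tau0e p q r s ∧
        kappaE p q r s * kappaE p q r s = 1) ∧
      -- (ii)
      ((τ₀ * kappaE p q r s) p = q ∧ (τ₀ * kappaE p q r s) r = s ∧
          (τ₂ * kappaE p q r s) p = s ∧ (τ₂ * kappaE p q r s) q = r ∧
          kappaE p s r q = kappaE p q r s) ∧
      -- (iii)
      ((τ₀ * kappaE p q r s) * kappaE p s r q, τ₁,
          (τ₂ * kappaE p q r s) * kappaE p s r q) = (τ₀, τ₁, τ₂) := by
  have hcomm : tau0e p q r s * tau2e p q r s = tau2e p q r s * tau0e p q r s := by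
    ext x
    rcases eq_or_ne x p with rfl | hxp
    · simp [tau0e, tau2e, kappaE, Equiv.Perm.mul_apply, Equiv.swap_apply_of_ne_of_ne, Equiv.swap_apply_left, Equiv.swap_apply_right, hpq, hpr, hps, hqr, hqs, hrs, Ne.symm hpq, Ne.symm hpr, Ne.symm hps, Ne.symm hqr, Ne.symm hqs, Ne.symm hrs]
    rcases eq_or_ne x q with rfl | hxq
    · simp [tau0e, tau2e, kappaE, Equiv.Perm.mul_apply, Equiv.swap_apply_of_ne_of_ne, Equiv.swap_apply_left, Equiv.swap_apply_right, hpq, hpr, hps, hqr, hqs, hrs, Ne.symm hpq, Ne.symm hpr, Ne.symm hps, Ne.symm hqr, Ne.symm hqs, Ne.symm hrs]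
    rcases eq_or_ne x r with rfl | hxr
    · simp [tau0e, tau2e, kappaE, Equiv.Perm.mul_apply, Equiv.swap_apply_of_ne_of_ne, Equiv.swap_apply_left, Equiv.swap_apply_right, hpq, hpr, hps, hqr, hqs, hrs, Ne.symm hpq, Ne.symm hpr, Ne.symm hps, Ne.symm hqr, Ne.symm hqs, Ne.symm hrs]
    rcases eq_or_ne x s with rfl | hxs
    · simp [tau0e, tau2e, kappaE, Equiv.Perm.mul_apply, Equiv.swap_apply_of_ne_of_ne, Equiv.swap_apply_left, Equiv.swap_apply_right, hpq, hpr, hps, hqr, hqs, hrs, Ne.symm hpq, Ne.symm hpr, Ne.symm hps, Ne.symm hqr, Ne.symm hqs, Ne.symm hrs]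
    simp [tau0e, tau2e, kappaE, Equiv.Perm.mul_apply, Equiv.swap_apply_of_ne_of_ne, Equiv.swap_apply_left, Equiv.swap_apply_right, hpq, hpr, hps, hqr, hqs, hrs, Ne.symm hpq, Ne.symm hpr, Ne.symm hps, Ne.symm hqr, Ne.symm hqs, Ne.symm hrs, hxp, hxq, hxr, hxs]
  have hsq : kappaE p q r s * kappaE p q r s = 1 := by
    ext x
    rcases eq_or_ne x p with rfl | hxp
    · simp [tau0e, tau2e, kappaE, Equiv.Perm.mul_apply, Equiv.swap_apply_of_ne_of_ne, Equiv.swap_apply_left, Equiv.swap_apply_right, hpq, hpr, hps, hqr, hqs, hrs, Ne.symm hpq, Ne.symm hpr, Ne.symm hps, Ne.symm hqr, Ne.symm hqs, Ne.symm hrs]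
    rcases eq_or_ne x q with rfl | hxq
    · simp [tau0e, tau2e, kappaE, Equiv.Perm.mul_apply, Equiv.swap_apply_of_ne_of_ne, Equiv.swap_apply_left, Equiv.swap_apply_right, hpq, hpr, hps, hqr, hqs, hrs, Ne.symm hpq, Ne.symm hpr, Ne.symm hps, Ne.symm hqr, Ne.symm hqs, Ne.symm hrs]
    rcases eq_or_ne x r with rfl | hxr
    · simp [tau0e, tau2e, kappaE, Equiv.Perm.mul_apply, Equiv.swap_apply_of_ne_of_ne, Equiv.swap_apply_left, Equiv.swap_apply_right, hpq, hpr, hps, hqr, hqs, hrs, Ne.symm hpq, Ne.symm hpr, Ne.symm hps, Ne.symm hqr, Ne.symm hqs, Ne.symm hrs]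
    rcases eq_or_ne x s with rfl | hxs
    · simp [tau0e, tau2e, kappaE, Equiv.Perm.mul_apply, Equiv.swap_apply_of_ne_of_ne, Equiv.swap_apply_left, Equiv.swap_apply_right, hpq, hpr, hps, hqr, hqs, hrs, Ne.symm hpq, Ne.symm hpr, Ne.symm hps, Ne.symm hqr, Ne.symm hqs, Ne.symm hrs]
    simp [tau0e, tau2e, kappaE, Equiv.Perm.mul_apply, Equiv.swap_apply_of_ne_of_ne, Equiv.swap_apply_left, Equiv.swap_apply_right, hpq, hpr, hps, hqr, hqs, hrs, Ne.symm hpq, Ne.symm hpr, Ne.symm hps, Ne.symm hqr, Ne.symm hqs, Ne.symm hrs, hxp, hxq, hxr, hxs]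
  have hkeq : kappaE p s r q = kappaE p q r s := by
    ext x
    rcases eq_or_ne x p with rfl | hxp
    · simp [tau0e, tau2e, kappaE, Equiv.Perm.mul_apply, Equiv.swap_apply_of_ne_of_ne, Equiv.swap_apply_left, Equiv.swap_apply_right, hpq, hpr, hps, hqr, hqs, hrs, Ne.symm hpq, Ne.symm hpr, Ne.symm hps, Ne.symm hqr, Ne.symm hqs, Ne.symm hrs]
    rcases eq_or_ne x q with rfl | hxq
    · simp [tau0e, tau2e, kappaE, Equiv.Perm.mul_apply, Equiv.swap_apply_of_ne_of_ne, Equiv.swap_apply_left, Equiv.swap_apply_right, hpq, hpr, hps, hqr, hqs, hrs, Ne.symm hpq, Ne.symm hpr, Ne.symm hps, Ne.symm hqr, Ne.symm hqs, Ne.symm hrs]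
    rcases eq_or_ne x r with rfl | hxr
    · simp [tau0e, tau2e, kappaE, Equiv.Perm.mul_apply, Equiv.swap_apply_of_ne_of_ne, Equiv.swap_apply_left, Equiv.swap_apply_right, hpq, hpr, hps, hqr, hqs, hrs, Ne.symm hpq, Ne.symm hpr, Ne.symm hps, Ne.symm hqr, Ne.symm hqs, Ne.symm hrs]
    rcases eq_or_ne x s with rfl | hxs
    · simp [tau0e, tau2e, kappaE, Equiv.Perm.mul_apply, Equiv.swap_apply_of_ne_of_ne, Equiv.swap_apply_left, Equiv.swap_apply_right, hpq, hpr, hps, hqr, hqs, hrs, Ne.symm hpq, Ne.symm hpr, Ne.symm hps, Ne.symm hqr, Ne.symm hqs, Ne.symm hrs]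
    simp [tau0e, tau2e, kappaE, Equiv.Perm.mul_apply, Equiv.swap_apply_of_ne_of_ne, Equiv.swap_apply_left, Equiv.swap_apply_right, hpq, hpr, hps, hqr, hqs, hrs, Ne.symm hpq, Ne.symm hpr, Ne.symm hps, Ne.symm hqr, Ne.symm hqs, Ne.symm hrs, hxp, hxq, hxr, hxs]
  have hkp : kappaE p q r s p = r := by simp [tau0e, tau2e, kappaE, Equiv.Perm.mul_apply, Equiv.swap_apply_of_ne_of_ne, Equiv.swap_apply_left, Equiv.swap_apply_right, hpq, hpr, hps, hqr, hqs, hrs, Ne.symm hpq, Ne.symm hpr, Ne.symm hps, Ne.symm hqr, Ne.symm hqs, Ne.symm hrs]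
  have hkq : kappaE p q r s q = s := by simp [tau0e, tau2e, kappaE, Equiv.Perm.mul_apply, Equiv.swap_apply_of_ne_of_ne, Equiv.swap_apply_left, Equiv.swap_apply_right, hpq, hpr, hps, hqr, hqs, hrs, Ne.symm hpq, Ne.symm hpr, Ne.symm hps, Ne.symm hqr, Ne.symm hqs, Ne.symm hrs]
  have hkr : kappaE p q r s r = p := by simp [tau0e, tau2e, kappaE, Equiv.Perm.mul_apply, Equiv.swap_apply_of_ne_of_ne, Equiv.swap_apply_left, Equiv.swap_apply_right, hpq, hpr, hps, hqr, hqs, hrs, Ne.symm hpq, Ne.symm hpr, Ne.symm hps, Ne.symm hqr, Ne.symm hqs, Ne.symm hrs]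
  have hks : kappaE p q r s s = q := by simp [tau0e, tau2e, kappaE, Equiv.Perm.mul_apply, Equiv.swap_apply_of_ne_of_ne, Equiv.swap_apply_left, Equiv.swap_apply_right, hpq, hpr, hps, hqr, hqs, hrs, Ne.symm hpq, Ne.symm hpr, Ne.symm hps, Ne.symm hqr, Ne.symm hqs, Ne.symm hrs]
  have h0r : τ₀ r = q := by rw [← e0q, h0inv]
  have h2q : τ₂ q = p := by rw [← e2p, h2inv]
  have h2s : τ₂ s = r := by rw [← e2r, h2inv]
  refine ⟨⟨hcomm, hsq⟩, ⟨?_, ?_, ?_, ?_, hkeq⟩, ?_⟩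
  · simp [Equiv.Perm.mul_apply, hkp, h0r]
  · simp [Equiv.Perm.mul_apply, hkr, e0p]
  · simp [Equiv.Perm.mul_apply, hkp, e2r]
  · simp [Equiv.Perm.mul_apply, hkq, h2s]
  · rw [hkeq, mul_assoc, hsq, mul_one, mul_assoc, hsq, mul_one]
end
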